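/- (Hölder-type bound on the nonlinearity in dual Besov Strichartz space) Let d ≥ 6 and F(z) = μ|z|^{4/(d−2)}z. Then for functions u, w on I×ℝ^d, ‖F(u)−F(w)‖_{L_t^{2(d+1)/(d+3)} Ḃ^{1/2}_{2(d+1)/(d+3),2}} ≲ ‖u−w‖_{W} (‖u−w‖_{S}^{4/(d−2)} + ‖w‖_{S}^{4/(d−2)}) + ‖u−w‖_{S}^{4/(d−2)} ‖w‖_{W}, where ‖·‖_W = ‖·‖_{L_t^{2(d+1)/(d−1)} Ḃ^{1/2}_{2(d+1)/(d−1),2}} and ‖·‖_S = ‖·‖_{L_{t,x}^{2(d+1)/(d−2)}}. -/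

import Mathlib

open MeasureTheory ENNReal

noncomputable section

/-- Homogeneous Besov `Ḃ^s_{p,2}` seminorm via the integral difference characterization. -/
def besovInt (d : ℕ) (s : ℝ) (p : ℝ≥0∞)
    (f : EuclideanSpace ℝ (Fin d) → ℝ) : ℝ≥0∞ :=
  (∫⁻ t : EuclideanSpace ℝ (Fin d),
      (eLpNorm (fun x => f (x + t) - f x) p volume) ^ (2 : ℝ)
        / (‖t‖₊ : ℝ≥0∞) ^ ((d : ℝ) + 2 * s)) ^ (1 / 2 : ℝ)

/-- The mixed time norm `(∫_I N(t)^q dt)^{1/q}`. -/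
def LtNorm (I : Set ℝ) (q : ℝ) (N : ℝ → ℝ≥0∞) : ℝ≥0∞ :=
  (∫⁻ t in I, N t ^ q) ^ (1 / q)

/-- The Besov–Strichartz norm `‖u‖ = ‖u‖_{L_t^q Ḃ^{1/2}_{q,2}}` with exponent `q`. -/
def WqNorm (d : ℕ) (I : Set ℝ) (q : ℝ) (u : ℝ → EuclideanSpace ℝ (Fin d) → ℝ) : ℝ≥0∞ :=
  LtNorm I q fun t => besovInt d (1 / 2) (ENNReal.ofReal q) (u t)

/-- The scattering norm `‖u‖_S = ‖u‖_{L_{t,x}^{2(d+1)/(d−2)}}`. -/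
def SNorm (d : ℕ) (I : Set ℝ) (u : ℝ → EuclideanSpace ℝ (Fin d) → ℝ) : ℝ≥0∞ :=
  LtNorm I (2 * ((d : ℝ) + 1) / ((d : ℝ) - 2)) fun t =>
    eLpNorm (u t) (ENNReal.ofReal (2 * ((d : ℝ) + 1) / ((d : ℝ) - 2))) volume

/-- The energy-critical nonlinearity `F(z) = μ|z|^{4/(d-2)} z`. -/
def Fnl (d : ℕ) (μ : ℝ) (z : ℝ) : ℝ := μ * |z| ^ ((4 : ℝ) / ((d : ℝ) - 2)) * z

end

/-!
Write `φ(z) = |z|^a z` with `a = 4/(d-2) ≤ 1` and `v = u - w`. Pointwise, the translation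
difference of `φ(u) - φ(w)` splits at `w(x+h) + v(x)` into a difference of `φ`, which is
`(a+1)M^a`-Lipschitz on `[-M, M]`, and a second difference of `φ`, bounded by
`(a+1)|v(x)|^a |w(x+h) - w(x)|` because `|·|^a` is `a`-Hölder. Hölder's inequality in `x` with
`1/p' = 1/s + 1/q`, `s = (d+1)/2`, `s a = r`, translation invariance, and Minkowski's inequality
in the Besov variable `h` give the estimate at each fixed time; since the time and space
exponents agree, the same Hölder split in `t` gives the Strichartz estimate.
-/

noncomputable def absRpowMul (a z : ℝ) : ℝ := |z| ^ a * z

lemma Fnl_eq_mul_absRpowMul (d : ℕ) (μ z : ℝ) :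
    Fnl d μ z = μ * absRpowMul (4 / ((d : ℝ) - 2)) z := by
  rw [Fnl, absRpowMul, mul_assoc]

section AbsRpowMul

variable {a : ℝ}

lemma hasDerivAt_absRpowMul (ha : 0 < a) (z : ℝ) :
    HasDerivAt (absRpowMul a) ((a + 1) * |z| ^ a) z := by
  rcases eq_or_ne z 0 with rfl | hz
  · rw [abs_zero, Real.zero_rpow ha.ne', mul_zero, hasDerivAt_iff_tendsto_slope]
    have hcont : Filter.Tendsto (fun y : ℝ => |y| ^ a) (nhdsWithin 0 {0}ᶜ) (nhds 0) := by
      have := ((continuous_abs.rpow_const fun _ => Or.inr ha.le).tendsto 0).mono_left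
        (nhdsWithin_le_nhds (s := {0}ᶜ))
      simpa [Real.zero_rpow ha.ne'] using this
    refine hcont.congr' ?_
    filter_upwards [self_mem_nhdsWithin] with y hy
    rw [slope_def_field, absRpowMul, absRpowMul, abs_zero, sub_zero, mul_zero, sub_zero,
      mul_div_cancel_right₀ _ hy]
  · have h : HasDerivAt (fun y => |y| ^ a * y)
        ((SignType.sign z : ℝ) * a * |z| ^ (a - 1) * z + |z| ^ a * 1) z :=
      ((hasDerivAt_abs hz).rpow_const (Or.inl (abs_ne_zero.mpr hz))).mul (hasDerivAt_id' z)
    refine h.congr_deriv ?_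
    have hs : (SignType.sign z : ℝ) * z = |z| := sign_mul_self z
    rw [Real.rpow_sub_one (abs_ne_zero.mpr hz)]
    field_simp
    linear_combination a * hs

lemma abs_abs_rpow_sub_abs_rpow_le (ha0 : 0 ≤ a) (ha1 : a ≤ 1) (x y : ℝ) :
    |(|x| ^ a - |y| ^ a)| ≤ |x - y| ^ a := by
  have key : ∀ x y : ℝ, |x| ^ a ≤ |y| ^ a + |x - y| ^ a := fun x y =>
    calc |x| ^ a ≤ (|y| + |x - y|) ^ a := by
          gcongr
          simpa using abs_add_le y (x - y)
      _ ≤ |y| ^ a + |x - y| ^ a :=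
          Real.rpow_add_le_add_rpow (abs_nonneg _) (abs_nonneg _) ha0 ha1
  rw [abs_sub_le_iff]
  constructor
  · linarith [key x y]
  · have := key y x
    rw [abs_sub_comm y x] at this
    linarith

lemma abs_absRpowMul_sub_le (ha : 0 < a) {x y M : ℝ} (hx : |x| ≤ M) (hy : |y| ≤ M) :
    |absRpowMul a x - absRpowMul a y| ≤ (a + 1) * M ^ a * |x - y| := by
  have hderiv : ∀ z ∈ Set.Icc (-M) M, ‖(a + 1) * |z| ^ a‖ ≤ (a + 1) * M ^ a := fun z hz => by
    rw [Real.norm_of_nonneg (by positivity)]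
    gcongr
    exact abs_le.mpr hz
  simpa only [Real.norm_eq_abs] using
    (convex_Icc (-M) M).norm_image_sub_le_of_norm_hasDerivWithin_le
      (fun z _ => (hasDerivAt_absRpowMul ha z).hasDerivWithinAt) hderiv
      (abs_le.mp hy) (abs_le.mp hx)

lemma abs_absRpowMul_second_diff_le (ha0 : 0 < a) (ha1 : a ≤ 1) (v c e : ℝ) :
    |absRpowMul a (c + v) - absRpowMul a c - (absRpowMul a (e + v) - absRpowMul a e)|
      ≤ (a + 1) * |v| ^ a * |c - e| := by
  have hderiv : ∀ x : ℝ, HasDerivAt (fun x => absRpowMul a (x + v) - absRpowMul a x)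
      ((a + 1) * |x + v| ^ a - (a + 1) * |x| ^ a) x := fun x =>
    ((hasDerivAt_absRpowMul ha0 (x + v)).comp_add_const x v).sub (hasDerivAt_absRpowMul ha0 x)
  have hbound : ∀ x ∈ Set.univ, ‖(a + 1) * |x + v| ^ a - (a + 1) * |x| ^ a‖
      ≤ (a + 1) * |v| ^ a := fun x _ => by
    rw [Real.norm_eq_abs, ← mul_sub, abs_mul, abs_of_pos (by linarith)]
    gcongr
    simpa using abs_abs_rpow_sub_abs_rpow_le ha0.le ha1 (x + v) x
  simpa only [Real.norm_eq_abs] using convex_univ.norm_image_sub_le_of_norm_hasDerivWithin_le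
    (fun x _ => (hderiv x).hasDerivWithinAt) hbound (Set.mem_univ e) (Set.mem_univ c)

lemma abs_absRpowMul_add_sub_sub_le (ha0 : 0 < a) (ha1 : a ≤ 1) (w₁ w₀ v₁ v₀ : ℝ) :
    |absRpowMul a (w₁ + v₁) - absRpowMul a w₁ - (absRpowMul a (w₀ + v₀) - absRpowMul a w₀)|
      ≤ (a + 1) * ((|w₁| ^ a + |v₁| ^ a + |v₀| ^ a) * |v₁ - v₀| + |v₀| ^ a * |w₁ - w₀|) := by
  set M := |w₁| + |v₁| + |v₀|
  have hfirst :
      |absRpowMul a (w₁ + v₁) - absRpowMul a (w₁ + v₀)| ≤ (a + 1) * M ^ a * |v₁ - v₀| := by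
    have h := abs_absRpowMul_sub_le ha0 (x := w₁ + v₁) (y := w₁ + v₀) (M := M)
      (by linarith [abs_add_le w₁ v₁, abs_nonneg v₀])
      (by linarith [abs_add_le w₁ v₀, abs_nonneg v₁])
    rwa [add_sub_add_left_eq_sub] at h
  have hM : M ^ a ≤ |w₁| ^ a + |v₁| ^ a + |v₀| ^ a :=
    calc M ^ a ≤ (|w₁| + |v₁|) ^ a + |v₀| ^ a :=
          Real.rpow_add_le_add_rpow (by positivity) (abs_nonneg _) ha0.le ha1
      _ ≤ |w₁| ^ a + |v₁| ^ a + |v₀| ^ a := by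
          gcongr
          exact Real.rpow_add_le_add_rpow (abs_nonneg _) (abs_nonneg _) ha0.le ha1
  calc _ = |(absRpowMul a (w₁ + v₁) - absRpowMul a (w₁ + v₀))
          + (absRpowMul a (w₁ + v₀) - absRpowMul a w₁
            - (absRpowMul a (w₀ + v₀) - absRpowMul a w₀))| := by ring_nf
    _ ≤ (a + 1) * M ^ a * |v₁ - v₀| + (a + 1) * |v₀| ^ a * |w₁ - w₀| :=
        (abs_add_le _ _).trans
          (add_le_add hfirst (abs_absRpowMul_second_diff_le ha0 ha1 v₀ w₁ w₀))
    _ = (a + 1) * (M ^ a * |v₁ - v₀| + |v₀| ^ a * |w₁ - w₀|) := by ring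
    _ ≤ _ := by gcongr

end AbsRpowMul

lemma eLpNorm_abs_rpow {α : Type*} [MeasurableSpace α] {ν : Measure α} {a : ℝ} (ha : 0 < a)
    (f : α → ℝ) (p : ℝ≥0∞) :
    eLpNorm (fun x => |f x| ^ a) p ν = eLpNorm f (p * ENNReal.ofReal a) ν ^ a := by
  simpa only [Real.norm_eq_abs] using eLpNorm_norm_rpow f ha

section TranslationDifference

variable {E : Type*} [MeasurableSpace E] [AddGroup E] [MeasurableAdd E]
  {ν : Measure E} [ν.IsAddRightInvariant] {a : ℝ}

lemma eLpNorm_abs_rpow_comp_add_right (ha : 0 < a) {f : E → ℝ} (hf : Measurable f) (h : E)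
    (p : ℝ≥0∞) :
    eLpNorm (fun x => |f (x + h)| ^ a) p ν = eLpNorm f (p * ENNReal.ofReal a) ν ^ a := by
  refine (eLpNorm_abs_rpow ha (fun x => f (x + h)) p).trans ?_
  congr 1
  exact eLpNorm_comp_measurePreserving hf.aestronglyMeasurable (measurePreserving_add_right ν h)

lemma eLpNorm_translate_sub_absRpowMul_sub_le (ha0 : 0 < a) (ha1 : a ≤ 1) {p q r : ℝ≥0∞}
    [p.HolderTriple q r] (hp : 1 ≤ p) (hr : 1 ≤ r) {u w : E → ℝ} (hu : Measurable u)
    (hw : Measurable w) (h : E) :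
    eLpNorm (fun x => absRpowMul a (u (x + h)) - absRpowMul a (w (x + h))
        - (absRpowMul a (u x) - absRpowMul a (w x))) r ν
      ≤ ENNReal.ofReal (a + 1) *
        ((eLpNorm w (p * ENNReal.ofReal a) ν ^ a
            + eLpNorm (fun x => u x - w x) (p * ENNReal.ofReal a) ν ^ a
            + eLpNorm (fun x => u x - w x) (p * ENNReal.ofReal a) ν ^ a)
          * eLpNorm (fun x => u (x + h) - w (x + h) - (u x - w x)) q ν
        + eLpNorm (fun x => u x - w x) (p * ENNReal.ofReal a) ν ^ a
          * eLpNorm (fun x => w (x + h) - w x) q ν) := by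
  set v : E → ℝ := fun x => u x - w x
  have hv : Measurable v := hu.sub hw
  have hpow : ∀ {f : E → ℝ}, Measurable f → Measurable fun x => |f x| ^ a := fun hf =>
    (continuous_abs.rpow_const fun _ => Or.inr ha0.le).measurable.comp hf
  set φ : E → ℝ := fun x => |w (x + h)| ^ a + |v (x + h)| ^ a + |v x| ^ a
  have hφ : Measurable φ :=
    ((hpow (hw.comp (measurable_add_const h))).add (hpow (hv.comp (measurable_add_const h)))).add
      (hpow hv)
  have hΔv : Measurable fun x => v (x + h) - v x := (hv.comp (measurable_add_const h)).sub hv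
  have hΔw : Measurable fun x => w (x + h) - w x := (hw.comp (measurable_add_const h)).sub hw
  set g₁ : E → ℝ := fun x => φ x * (v (x + h) - v x)
  set g₂ : E → ℝ := fun x => |v x| ^ a * (w (x + h) - w x)
  have hpointwise : ∀ x, ‖absRpowMul a (u (x + h)) - absRpowMul a (w (x + h))
      - (absRpowMul a (u x) - absRpowMul a (w x))‖
        ≤ ((a + 1) • fun x => ‖g₁ x‖ + ‖g₂ x‖) x := by
    intro x
    have key := abs_absRpowMul_add_sub_sub_le ha0 ha1 (w (x + h)) (w x) (v (x + h)) (v x)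
    simp only [v, add_sub_cancel] at key
    have hφx : 0 ≤ φ x := by positivity
    simp only [Real.norm_eq_abs, g₁, g₂, Pi.smul_apply, smul_eq_mul, abs_mul, abs_of_nonneg hφx,
      abs_abs, Real.abs_rpow_of_nonneg (abs_nonneg _)]
    exact key
  have hφ_le : eLpNorm φ p ν ≤ eLpNorm w (p * ENNReal.ofReal a) ν ^ a
      + eLpNorm v (p * ENNReal.ofReal a) ν ^ a + eLpNorm v (p * ENNReal.ofReal a) ν ^ a := by
    calc eLpNorm φ p ν
        ≤ eLpNorm (fun x => |w (x + h)| ^ a) p ν + eLpNorm (fun x => |v (x + h)| ^ a) p ν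
          + eLpNorm (fun x => |v x| ^ a) p ν := by
          have hw' := hpow (hw.comp (measurable_add_const h))
          have hv' := hpow (hv.comp (measurable_add_const h))
          exact (eLpNorm_add_le (hw'.add hv').aestronglyMeasurable
            (hpow hv).aestronglyMeasurable hp).trans (add_le_add_left
              (eLpNorm_add_le hw'.aestronglyMeasurable hv'.aestronglyMeasurable hp) _)
      _ = _ := by
          rw [eLpNorm_abs_rpow_comp_add_right ha0 hw, eLpNorm_abs_rpow_comp_add_right ha0 hv,
            eLpNorm_abs_rpow ha0]
  calc _ ≤ eLpNorm ((a + 1) • fun x => ‖g₁ x‖ + ‖g₂ x‖) r ν := eLpNorm_mono_real hpointwise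
    _ ≤ ENNReal.ofReal (a + 1) * (eLpNorm g₁ r ν + eLpNorm g₂ r ν) := by
        rw [eLpNorm_const_smul, Real.enorm_of_nonneg (by linarith)]
        gcongr
        have := eLpNorm_add_le (μ := ν) (f := fun x => ‖g₁ x‖) (g := fun x => ‖g₂ x‖)
          (hφ.mul hΔv).norm.aestronglyMeasurable ((hpow hv).mul hΔw).norm.aestronglyMeasurable
          hr
        rwa [eLpNorm_norm, eLpNorm_norm] at this
    _ ≤ _ := by
        gcongr
        · exact (eLpNorm_smul_le_mul_eLpNorm (p := p) (q := q) hΔv.aestronglyMeasurable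
            hφ.aestronglyMeasurable).trans (by gcongr)
        · refine (eLpNorm_smul_le_mul_eLpNorm (p := p) (q := q) hΔw.aestronglyMeasurable
            (hpow hv).aestronglyMeasurable).trans_eq ?_
          rw [eLpNorm_abs_rpow ha0]

end TranslationDifference

section ENNRealValued

variable {α : Type*} [MeasurableSpace α] {ν : Measure α}

lemma ENNReal.eLpNorm'_const_mul {f : α → ℝ≥0∞} (hf : AEMeasurable f ν) (c : ℝ≥0∞) {q : ℝ}
    (hq : 0 < q) : eLpNorm' (fun x => c * f x) q ν = c * eLpNorm' f q ν := by
  simp only [eLpNorm', enorm_eq_self, ENNReal.mul_rpow_of_nonneg _ _ hq.le]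
  rw [lintegral_const_mul'' _ (hf.pow_const q), ENNReal.mul_rpow_of_nonneg _ _ (by positivity),
    ← ENNReal.rpow_mul, mul_one_div_cancel hq.ne', ENNReal.rpow_one]

lemma ENNReal.eLpNorm'_mul_le {f g : α → ℝ≥0∞} (hf : AEMeasurable f ν) (hg : AEMeasurable g ν)
    {p q r : ℝ} (hqrp : q.HolderTriple r p) :
    eLpNorm' (f * g) p ν ≤ eLpNorm' f q ν * eLpNorm' g r ν := by
  simpa only [eLpNorm', enorm_eq_self] using
    ENNReal.lintegral_Lp_mul_le_Lq_mul_Lr hqrp.pos' hqrp.lt hqrp.one_div_eq ν hf hg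

lemma ENNReal.eLpNorm'_rpow {f : α → ℝ≥0∞} {a : ℝ} (ha : 0 < a) (q : ℝ) :
    eLpNorm' (fun x => f x ^ a) q ν = eLpNorm' f (q * a) ν ^ a := by
  simpa only [enorm_eq_self] using eLpNorm'_enorm_rpow f q a ha (μ := ν)

lemma ENNReal.eLpNorm'_le_of_le_rpow_mul_add {N V W A B : α → ℝ≥0∞} (hV : AEMeasurable V ν)
    (hW : AEMeasurable W ν) (hA : AEMeasurable A ν) (hB : AEMeasurable B ν) {a p q s : ℝ}
    (ha : 0 < a) (hsqp : s.HolderTriple q p) (hp : 1 ≤ p) (hs : 1 ≤ s) (K : ℝ≥0∞)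
    (hN : ∀ t, N t ≤ K * ((W t ^ a + V t ^ a + V t ^ a) * A t + V t ^ a * B t)) :
    eLpNorm' N p ν ≤ K * ((eLpNorm' W (s * a) ν ^ a + eLpNorm' V (s * a) ν ^ a
        + eLpNorm' V (s * a) ν ^ a) * eLpNorm' A q ν
      + eLpNorm' V (s * a) ν ^ a * eLpNorm' B q ν) := by
  have hVa := hV.pow_const a
  have hWa := hW.pow_const a
  have hX : eLpNorm' (fun t => W t ^ a + V t ^ a + V t ^ a) s ν
      ≤ eLpNorm' W (s * a) ν ^ a + eLpNorm' V (s * a) ν ^ a + eLpNorm' V (s * a) ν ^ a := by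
    simp only [← ENNReal.eLpNorm'_rpow ha]
    exact (eLpNorm'_add_le (hWa.add hVa).aestronglyMeasurable hVa.aestronglyMeasurable
      hs).trans (add_le_add_left
        (eLpNorm'_add_le hWa.aestronglyMeasurable hVa.aestronglyMeasurable hs) _)
  have hXA := ((hWa.add hVa).add hVa).mul hA
  have hYB := hVa.mul hB
  calc eLpNorm' N p ν
      ≤ eLpNorm' (fun t => K * ((W t ^ a + V t ^ a + V t ^ a) * A t + V t ^ a * B t)) p ν :=
        eLpNorm'_mono_enorm_ae (by linarith) (ae_of_all _ hN)
    _ = K * eLpNorm' (fun t => (W t ^ a + V t ^ a + V t ^ a) * A t + V t ^ a * B t) p ν :=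
        ENNReal.eLpNorm'_const_mul (hXA.add hYB) K (by linarith)
    _ ≤ K * (eLpNorm' (fun t => (W t ^ a + V t ^ a + V t ^ a) * A t) p ν
          + eLpNorm' (fun t => V t ^ a * B t) p ν) := by
        gcongr
        exact eLpNorm'_add_le hXA.aestronglyMeasurable hYB.aestronglyMeasurable hp
    _ ≤ _ := by
        gcongr
        · exact (ENNReal.eLpNorm'_mul_le ((hWa.add hVa).add hVa) hA hsqp).trans
            (mul_le_mul_left hX _)
        · exact (ENNReal.eLpNorm'_mul_le hVa hB hsqp).trans_eq
            (by rw [ENNReal.eLpNorm'_rpow ha])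

end ENNRealValued

lemma Measurable.eLpNorm_prod_right {α β F : Type*} [MeasurableSpace α] [MeasurableSpace β]
    [NormedAddCommGroup F] [MeasurableSpace F] [OpensMeasurableSpace F] {ν : Measure β}
    [SFinite ν] {f : α × β → F} (hf : Measurable f) {p : ℝ≥0∞} (hp0 : p ≠ 0) (hp : p ≠ ∞) :
    Measurable fun x => eLpNorm (fun y => f (x, y)) p ν := by
  simp_rw [eLpNorm_eq_lintegral_rpow_enorm_toReal hp0 hp]
  exact (hf.enorm.pow_const _).lintegral_prod_right'.pow_const _

section Besov

variable {d : ℕ}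

lemma besovInt_eq_eLpNorm' (s : ℝ) (p : ℝ≥0∞) (f : EuclideanSpace ℝ (Fin d) → ℝ) :
    besovInt d s p f = eLpNorm' (fun h => eLpNorm (fun x => f (x + h) - f x) p volume
      / (‖h‖₊ : ℝ≥0∞) ^ (((d : ℝ) + 2 * s) / 2)) 2 volume := by
  simp only [besovInt, eLpNorm', enorm_eq_self, ENNReal.div_rpow_of_nonneg _ _ zero_le_two,
    ← ENNReal.rpow_mul, div_mul_cancel₀ ((d : ℝ) + 2 * s) two_ne_zero]

lemma measurable_besovInt {α : Type*} [MeasurableSpace α]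
    {v : α → EuclideanSpace ℝ (Fin d) → ℝ} (hv : Measurable (Function.uncurry v)) (s : ℝ)
    {p : ℝ≥0∞} (hp0 : p ≠ 0) (hp : p ≠ ∞) :
    Measurable fun t => besovInt d s p (v t) := by
  have hΔ : Measurable fun z : (α × EuclideanSpace ℝ (Fin d)) × EuclideanSpace ℝ (Fin d) =>
      v z.1.1 (z.2 + z.1.2) - v z.1.1 z.2 :=
    (hv.comp (measurable_fst.fst.prodMk (measurable_snd.add measurable_fst.snd))).sub
      (hv.comp (measurable_fst.fst.prodMk measurable_snd))
  unfold besovInt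
  refine (Measurable.lintegral_prod_right ?_).pow_const _
  exact ((hΔ.eLpNorm_prod_right hp0 hp).pow_const _).div
    ((measurable_nnnorm.comp measurable_snd).coe_nnreal_ennreal.pow_const _)

lemma besovInt_le_of_translate_le (s : ℝ) {p q : ℝ≥0∞} (hq0 : q ≠ 0) (hq : q ≠ ∞)
    {f g k : EuclideanSpace ℝ (Fin d) → ℝ} (hg : Measurable g) (hk : Measurable k) (X Y : ℝ≥0∞)
    (hle : ∀ h, eLpNorm (fun x => f (x + h) - f x) p volume
      ≤ X * eLpNorm (fun x => g (x + h) - g x) q volume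
        + Y * eLpNorm (fun x => k (x + h) - k x) q volume) :
    besovInt d s p f ≤ X * besovInt d s q g + Y * besovInt d s q k := by
  have hΔ : ∀ {g : EuclideanSpace ℝ (Fin d) → ℝ}, Measurable g →
      Measurable fun h => eLpNorm (fun x => g (x + h) - g x) q volume /
        (‖h‖₊ : ℝ≥0∞) ^ (((d : ℝ) + 2 * s) / 2) := fun hg =>
    (((hg.comp (measurable_snd.add measurable_fst)).sub
      (hg.comp measurable_snd)).eLpNorm_prod_right hq0 hq).div
        (measurable_nnnorm.coe_nnreal_ennreal.pow_const _)
  simp only [besovInt_eq_eLpNorm']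
  refine (eLpNorm'_mono_enorm_ae zero_le_two (ae_of_all _ fun h => ?_)).trans
    ((eLpNorm'_add_le ((hΔ hg).const_mul X).aestronglyMeasurable
      ((hΔ hk).const_mul Y).aestronglyMeasurable one_le_two).trans_eq ?_)
  · rw [enorm_eq_self, enorm_eq_self, Pi.add_apply, ← mul_div_assoc, ← mul_div_assoc,
      ← ENNReal.add_div]
    exact ENNReal.div_le_div_right (hle h) _
  · rw [ENNReal.eLpNorm'_const_mul (hΔ hg).aemeasurable _ two_pos,
      ENNReal.eLpNorm'_const_mul (hΔ hk).aemeasurable _ two_pos]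

end Besov

lemma LtNorm_eq_eLpNorm' (I : Set ℝ) (q : ℝ) (N : ℝ → ℝ≥0∞) :
    LtNorm I q N = eLpNorm' N q (volume.restrict I) := by
  simp only [LtNorm, eLpNorm', enorm_eq_self]

section Strichartz

variable {d : ℕ} {a : ℝ}

lemma besovInt_mul_absRpowMul_sub_le (ha0 : 0 < a) (ha1 : a ≤ 1) (μ s : ℝ) {p q r : ℝ≥0∞}
    [p.HolderTriple q r] (hp : 1 ≤ p) (hr : 1 ≤ r) (hq0 : q ≠ 0) (hq : q ≠ ∞)
    {u w : EuclideanSpace ℝ (Fin d) → ℝ} (hu : Measurable u) (hw : Measurable w) :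
    besovInt d s r (fun x => μ * absRpowMul a (u x) - μ * absRpowMul a (w x))
      ≤ ‖μ‖ₑ * ENNReal.ofReal (a + 1) *
        ((eLpNorm w (p * ENNReal.ofReal a) volume ^ a
            + eLpNorm (fun x => u x - w x) (p * ENNReal.ofReal a) volume ^ a
            + eLpNorm (fun x => u x - w x) (p * ENNReal.ofReal a) volume ^ a)
          * besovInt d s q (fun x => u x - w x)
        + eLpNorm (fun x => u x - w x) (p * ENNReal.ofReal a) volume ^ a
          * besovInt d s q w) := by
  set K := ‖μ‖ₑ * ENNReal.ofReal (a + 1)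
  set Sv := eLpNorm (fun x => u x - w x) (p * ENNReal.ofReal a) volume ^ a
  set Sw := eLpNorm w (p * ENNReal.ofReal a) volume ^ a
  refine (besovInt_le_of_translate_le (g := fun x => u x - w x) s hq0 hq (hu.sub hw) hw
    (K * (Sw + Sv + Sv)) (K * Sv) fun h => ?_).trans_eq (by ring)
  have hμ : (fun x => μ * absRpowMul a (u (x + h)) - μ * absRpowMul a (w (x + h))
      - (μ * absRpowMul a (u x) - μ * absRpowMul a (w x)))
      = μ • fun x => absRpowMul a (u (x + h)) - absRpowMul a (w (x + h))
        - (absRpowMul a (u x) - absRpowMul a (w x)) := by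
    ext x
    simp only [Pi.smul_apply, smul_eq_mul]
    ring
  rw [hμ, eLpNorm_const_smul]
  calc _ ≤ ‖μ‖ₑ * (ENNReal.ofReal (a + 1) *
          ((Sw + Sv + Sv) * eLpNorm (fun x => u (x + h) - w (x + h) - (u x - w x)) q volume
            + Sv * eLpNorm (fun x => w (x + h) - w x) q volume)) := by
        gcongr
        exact eLpNorm_translate_sub_absRpowMul_sub_le ha0 ha1 hp hr hu hw h
    _ = _ := by ring

theorem LtNorm_besovInt_mul_absRpowMul_sub_le (ha0 : 0 < a) (ha1 : a ≤ 1) (μ σ : ℝ)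
    {p q s r : ℝ} (hsqp : s.HolderTriple q p) (hp : 1 ≤ p) (hs : 1 ≤ s) (hr : s * a = r)
    (I : Set ℝ) {u w : ℝ → EuclideanSpace ℝ (Fin d) → ℝ} (hu : Measurable (Function.uncurry u))
    (hw : Measurable (Function.uncurry w)) :
    LtNorm I p (fun t => besovInt d σ (ENNReal.ofReal p)
        (fun x => μ * absRpowMul a (u t x) - μ * absRpowMul a (w t x)))
      ≤ 2 * ‖μ‖ₑ * ENNReal.ofReal (a + 1) *
        (LtNorm I q (fun t => besovInt d σ (ENNReal.ofReal q) (fun x => u t x - w t x))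
            * (LtNorm I r (fun t => eLpNorm (fun x => u t x - w t x) (ENNReal.ofReal r) volume)
                ^ a
              + LtNorm I r (fun t => eLpNorm (w t) (ENNReal.ofReal r) volume) ^ a)
          + LtNorm I r (fun t => eLpNorm (fun x => u t x - w t x) (ENNReal.ofReal r) volume) ^ a
            * LtNorm I q (fun t => besovInt d σ (ENNReal.ofReal q) (w t))) := by
  subst hr
  have : (ENNReal.ofReal s).HolderTriple (ENNReal.ofReal q) (ENNReal.ofReal p) :=
    hsqp.ennrealOfReal
  have hv : Measurable (Function.uncurry fun t x => u t x - w t x) := hu.sub hw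
  have hq0 : ENNReal.ofReal q ≠ 0 := by simpa using hsqp.symm.pos
  have hsa0 : ENNReal.ofReal (s * a) ≠ 0 := by simpa using mul_pos hsqp.pos ha0
  simp only [LtNorm_eq_eLpNorm']
  set K := ‖μ‖ₑ * ENNReal.ofReal (a + 1)
  set V := eLpNorm' (fun t => eLpNorm (fun x => u t x - w t x) (ENNReal.ofReal (s * a)) volume)
    (s * a) (volume.restrict I) ^ a
  set W := eLpNorm' (fun t => eLpNorm (w t) (ENNReal.ofReal (s * a)) volume)
    (s * a) (volume.restrict I) ^ a
  set Bv := eLpNorm' (fun t => besovInt d σ (ENNReal.ofReal q) fun x => u t x - w t x) q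
    (volume.restrict I)
  set Bw := eLpNorm' (fun t => besovInt d σ (ENNReal.ofReal q) (w t)) q (volume.restrict I)
  calc _ ≤ K * ((W + V + V) * Bv + V * Bw) := by
        refine ENNReal.eLpNorm'_le_of_le_rpow_mul_add
          (hv.eLpNorm_prod_right hsa0 ENNReal.ofReal_ne_top).aemeasurable
          (hw.eLpNorm_prod_right hsa0 ENNReal.ofReal_ne_top).aemeasurable
          (measurable_besovInt hv σ hq0 ENNReal.ofReal_ne_top).aemeasurable
          (measurable_besovInt hw σ hq0 ENNReal.ofReal_ne_top).aemeasurable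
          ha0 hsqp hp hs K fun t => ?_
        rw [ENNReal.ofReal_mul hsqp.nonneg]
        exact besovInt_mul_absRpowMul_sub_le ha0 ha1 μ σ (ENNReal.one_le_ofReal.mpr hs)
          (ENNReal.one_le_ofReal.mpr hp) hq0 ENNReal.ofReal_ne_top
          hu.of_uncurry_left hw.of_uncurry_left
    _ ≤ K * ((W + V + V) * Bv + V * Bw) + K * (W * Bv + V * Bw) := le_self_add
    _ = _ := by ring

end Strichartz

/-- Hölder-type bound on the nonlinearity in the dual Besov Strichartz space `W'`:
`‖F(u)−F(w)‖_{W'} ≲ ‖u−w‖_W (‖u−w‖_S^{4/(d−2)} + ‖w‖_S^{4/(d−2)}) + ‖u−w‖_S^{4/(d−2)} ‖w‖_W`,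
where `W = L_t^{2(d+1)/(d−1)} Ḃ^{1/2}_{2(d+1)/(d−1),2}`, `W' = L_t^{2(d+1)/(d+3)}
Ḃ^{1/2}_{2(d+1)/(d+3),2}` and `S = L_{t,x}^{2(d+1)/(d−2)}`. -/
theorem stmt16 (d : ℕ) (hd : 6 ≤ d) (μ : ℝ) (hμ : μ = 1 ∨ μ = -1) :
    ∃ C : ℝ≥0∞, 0 < C ∧ C ≠ ∞ ∧
      ∀ (I : Set ℝ) (u w : ℝ → EuclideanSpace ℝ (Fin d) → ℝ),
        Measurable (Function.uncurry u) → Measurable (Function.uncurry w) →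
        WqNorm d I (2 * ((d : ℝ) + 1) / ((d : ℝ) + 3))
            (fun t x => Fnl d μ (u t x) - Fnl d μ (w t x))
          ≤ C *
            (WqNorm d I (2 * ((d : ℝ) + 1) / ((d : ℝ) - 1)) (fun t x => u t x - w t x)
                * (SNorm d I (fun t x => u t x - w t x) ^ ((4 : ℝ) / ((d : ℝ) - 2))
                    + SNorm d I w ^ ((4 : ℝ) / ((d : ℝ) - 2)))
              + SNorm d I (fun t x => u t x - w t x) ^ ((4 : ℝ) / ((d : ℝ) - 2))
                * WqNorm d I (2 * ((d : ℝ) + 1) / ((d : ℝ) - 1)) w) := by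
  have hd6 : (6 : ℝ) ≤ d := by exact_mod_cast hd
  have ha0 : 0 < (4 : ℝ) / ((d : ℝ) - 2) := div_pos four_pos (by linarith)
  have ha1 : (4 : ℝ) / ((d : ℝ) - 2) ≤ 1 := (div_le_one (by linarith)).mpr (by linarith)
  have hsqp : (((d : ℝ) + 1) / 2).HolderTriple (2 * ((d : ℝ) + 1) / ((d : ℝ) - 1))
      (2 * ((d : ℝ) + 1) / ((d : ℝ) + 3)) := by
    refine ⟨?_, by positivity, div_pos (by positivity) (by linarith)⟩
    field_simp
    ring
  have hp : 1 ≤ 2 * ((d : ℝ) + 1) / ((d : ℝ) + 3) :=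
    (one_le_div (by positivity)).mpr (by linarith)
  have hs : 1 ≤ ((d : ℝ) + 1) / 2 := (one_le_div two_pos).mpr (by linarith)
  have hr : ((d : ℝ) + 1) / 2 * (4 / ((d : ℝ) - 2)) = 2 * ((d : ℝ) + 1) / ((d : ℝ) - 2) := by
    field_simp
    ring
  have hμ0 : μ ≠ 0 := by rcases hμ with rfl | rfl <;> norm_num
  refine ⟨2 * ‖μ‖ₑ * ENNReal.ofReal (4 / ((d : ℝ) - 2) + 1),
    ENNReal.mul_pos (mul_ne_zero two_ne_zero (enorm_ne_zero.mpr hμ0))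
      (ENNReal.ofReal_pos.mpr (by linarith)).ne', by finiteness,
    fun I u w hu hw => ?_⟩
  simp only [WqNorm, SNorm, Fnl_eq_mul_absRpowMul]
  exact LtNorm_besovInt_mul_absRpowMul_sub_le ha0 ha1 μ (1 / 2) hsqp hp hs hr I hu hw
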